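/- Let T be a surmonad on a surcategory (𝓔, A) over 𝔾 and suppose (𝓔, A) is surcocomplete. Then the surcategory (𝓔^T, A) of suralgebras has surcoequalizers if and only if (𝓔^T, A) is surcocomplete. -/

import Mathlib

open CategoryTheory CategoryTheory.Limits CategoryTheory.MonoidalCategory

universe w w' v u v₁ u₁ v₂ u₂ v₃ u₃ v₄ u₄

namespace Sur

variable {G : Type u} [Category.{v} G]

section Basic

variable {E : Type u₁} [Category.{v₁} E]

/-- A diagram whose composite with the arity functor is constant at `B`. -/
structure ArityConst (A : E ⥤ G) {J : Type w} [Category.{w'} J] (F : J ⥤ E) (B : G) : Prop where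
  obj_eq : ∀ j, A.obj (F.obj j) = B
  map_eq : ∀ {j j'} (f : j ⟶ j'),
    A.map (F.map f) = eqToHom ((obj_eq j).trans (obj_eq j').symm)

/-- A surcone on a diagram whose arity is constant at `B`: a cone together with an arity
morphism under which all legs lie. -/
structure Surcone (A : E ⥤ G) {J : Type w} [Category.{w'} J] (F : J ⥤ E) (B : G)
    (h : ∀ j, A.obj (F.obj j) = B) where
  pt : E
  leg : ∀ j, pt ⟶ F.obj j
  w : ∀ {j j'} (f : j ⟶ j'), leg j ≫ F.map f = leg j'
  arity : A.obj pt ⟶ B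
  fac : ∀ j, A.map (leg j) ≫ eqToHom (h j) = arity

/-- A surcone is a surlimit if its apex is in the fiber over `B`, its arity is the identity,
and every surcone factors through it by a unique morphism. -/
structure IsSurlimit (A : E ⥤ G) {J : Type w} [Category.{w'} J] {F : J ⥤ E} {B : G}
    {h : ∀ j, A.obj (F.obj j) = B} (c : Surcone A F B h) : Prop where
  pt_eq : A.obj c.pt = B
  arity_eq : c.arity = eqToHom pt_eq
  lift : ∀ c' : Surcone A F B h, ∃! f : c'.pt ⟶ c.pt,
    (∀ j, f ≫ c.leg j = c'.leg j) ∧ A.map f ≫ eqToHom pt_eq = c'.arity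

/-- `(E, A)` has `J`-surlimits. -/
def HasSurlimitsOfShape (A : E ⥤ G) (J : Type w) [Category.{w'} J] : Prop :=
  ∀ (F : J ⥤ E) (B : G) (hc : ArityConst A F B),
    ∃ c : Surcone A F B hc.obj_eq, IsSurlimit A c

/-- Dual notion : surcocone. -/
structure Surcocone (A : E ⥤ G) {J : Type w} [Category.{w'} J] (F : J ⥤ E) (B : G)
    (h : ∀ j, A.obj (F.obj j) = B) where
  pt : E
  leg : ∀ j, F.obj j ⟶ pt
  w : ∀ {j j'} (f : j ⟶ j'), F.map f ≫ leg j' = leg j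
  arity : B ⟶ A.obj pt
  fac : ∀ j, eqToHom (h j).symm ≫ A.map (leg j) = arity

structure IsSurcolimit (A : E ⥤ G) {J : Type w} [Category.{w'} J] {F : J ⥤ E} {B : G}
    {h : ∀ j, A.obj (F.obj j) = B} (c : Surcocone A F B h) : Prop where
  pt_eq : A.obj c.pt = B
  arity_eq : c.arity = eqToHom pt_eq.symm
  desc : ∀ c' : Surcocone A F B h, ∃! f : c.pt ⟶ c'.pt,
    (∀ j, c.leg j ≫ f = c'.leg j) ∧ eqToHom pt_eq.symm ≫ A.map f = c'.arity

def HasSurcolimitsOfShape (A : E ⥤ G) (J : Type w) [Category.{w'} J] : Prop :=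
  ∀ (F : J ⥤ E) (B : G) (hc : ArityConst A F B),
    ∃ c : Surcocone A F B hc.obj_eq, IsSurcolimit A c

/-- `(E, A)` has K-equalizers : every parallel pair with equal arity image has an equalizer
lying over an identity of the base. -/
def HasKEqualizers (A : E ⥤ G) : Prop :=
  ∀ ⦃a b : E⦄ (f g : a ⟶ b), A.map f = A.map g →
    ∃ (c : E) (e : c ⟶ a) (hc : A.obj c = A.obj a),
      A.map e = eqToHom hc ∧ e ≫ f = e ≫ g ∧
      ∀ ⦃d : E⦄ (k : d ⟶ a), k ≫ f = k ≫ g → ∃! l : d ⟶ c, l ≫ e = k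

/-- `e` is a surcoequalizer of the pair `(f, g)`. -/
def IsSurcoequalizer (A : E ⥤ G) {a b c : E} (f g : a ⟶ b) (e : b ⟶ c) : Prop :=
  ∃ h : A.obj b = A.obj c, A.map e = eqToHom h ∧ f ≫ e = g ≫ e ∧
    ∀ ⦃d : E⦄ (k : b ⟶ d), f ≫ k = g ≫ k → ∃! l : c ⟶ d, e ≫ l = k

/-- `(E, A)` has surcoequalizers of all parallel pairs lying in one fiber. -/
def HasSurcoequalizers (A : E ⥤ G) : Prop :=
  ∀ ⦃a b : E⦄ (f g : a ⟶ b) (hab : A.obj a = A.obj b),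
    A.map f = eqToHom hab → A.map g = eqToHom hab →
    ∃ (c : E) (e : b ⟶ c), IsSurcoequalizer A f g e

/-- `(E, A)` has surequalizers of all parallel pairs lying in one fiber. -/
def HasSurequalizers (A : E ⥤ G) : Prop :=
  ∀ ⦃a b : E⦄ (f g : a ⟶ b) (hab : A.obj a = A.obj b),
    A.map f = eqToHom hab → A.map g = eqToHom hab →
    ∃ (c : E) (e : c ⟶ a) (hc : A.obj c = A.obj a),
      A.map e = eqToHom hc ∧ e ≫ f = e ≫ g ∧
      ∀ ⦃d : E⦄ (k : d ⟶ a), k ≫ f = k ≫ g → ∃! l : d ⟶ c, l ≫ e = k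

/-- A split surfork : a split fork lying entirely in one fiber. -/
def IsSplitSurfork (A : E ⥤ G) {a b c : E} (f g : a ⟶ b) (h : b ⟶ c) : Prop :=
  (∃ hab : A.obj a = A.obj b, A.map f = eqToHom hab ∧ A.map g = eqToHom hab) ∧
  (∃ hbc : A.obj b = A.obj c, A.map h = eqToHom hbc) ∧
  f ≫ h = g ≫ h ∧
  ∃ (s : c ⟶ b) (t : b ⟶ a),
    (∃ hcb : A.obj c = A.obj b, A.map s = eqToHom hcb) ∧
    (∃ hba : A.obj b = A.obj a, A.map t = eqToHom hba) ∧
    s ≫ h = 𝟙 c ∧ t ≫ f = 𝟙 b ∧ t ≫ g = h ≫ s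

/-- A surinitial object in the fiber over `Gobj`. -/
def Surinitial (A : E ⥤ G) (Gobj : G) (x : E) : Prop :=
  ∃ hx : A.obj x = Gobj, ∀ (d : E) (h : Gobj ⟶ A.obj d),
    ∃! f : x ⟶ d, A.map f = eqToHom hx ≫ h

/-- A surmonad : a monad whose underlying functor, unit and multiplication lie over
identities of the base. -/
structure IsSurmonad (A : E ⥤ G) (T : Monad E) : Prop where
  sur : T.toFunctor ⋙ A = A
  unit_arity : ∀ X : E, A.map (T.η.app X) = eqToHom (Functor.congr_obj sur X).symm
  mul_arity : ∀ X : E, A.map (T.μ.app X) = eqToHom (Functor.congr_obj sur (T.obj X))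

end Basic

section Two

variable {E : Type u₁} [Category.{v₁} E] {E' : Type u₂} [Category.{v₂} E']

/-- An absolute surcoequalizer : a surcoequalizer preserved by every surfunctor. -/
def IsAbsoluteSurcoequalizer.{ua, va, ug, vg, ue, ve} {Gb : Type ug} [Category.{vg} Gb]
    {Eb : Type ue} [Category.{ve} Eb] (A : Eb ⥤ Gb) {a b c : Eb}
    (f g : a ⟶ b) (e : b ⟶ c) : Prop :=
  IsSurcoequalizer A f g e ∧
  ∀ (D : Type ua) [Category.{va} D] (A' : D ⥤ Gb) (Fc : Eb ⥤ D),
    Fc ⋙ A' = A → IsSurcoequalizer A' (Fc.map f) (Fc.map g) (Fc.map e)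

/-- The image of a surcone under a surfunctor. -/
def Surcone.map {A : E ⥤ G} {A' : E' ⥤ G} (Fc : E ⥤ E') (hsur : Fc ⋙ A' = A)
    {J : Type w} [Category.{w'} J] {D : J ⥤ E} {B : G} {h : ∀ j, A.obj (D.obj j) = B}
    (c : Surcone A D B h) :
    Surcone A' (D ⋙ Fc) B (fun j => (Functor.congr_obj hsur (D.obj j)).trans (h j)) where
  pt := Fc.obj c.pt
  leg j := Fc.map (c.leg j)
  w {j j'} f := by
    dsimp only [Functor.comp_map]
    rw [← Fc.map_comp, c.w f]
  arity := eqToHom (Functor.congr_obj hsur c.pt) ≫ c.arity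
  fac j := by
    have h1 := Functor.congr_hom hsur (c.leg j)
    dsimp only [Functor.comp_map] at h1
    rw [h1, Category.assoc, Category.assoc, eqToHom_trans, c.fac j]

/-- The image of a surcocone under a surfunctor. -/
def Surcocone.map {A : E ⥤ G} {A' : E' ⥤ G} (Fc : E ⥤ E') (hsur : Fc ⋙ A' = A)
    {J : Type w} [Category.{w'} J] {D : J ⥤ E} {B : G} {h : ∀ j, A.obj (D.obj j) = B}
    (c : Surcocone A D B h) :
    Surcocone A' (D ⋙ Fc) B (fun j => (Functor.congr_obj hsur (D.obj j)).trans (h j)) where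
  pt := Fc.obj c.pt
  leg j := Fc.map (c.leg j)
  w {j j'} f := by
    dsimp only [Functor.comp_map]
    rw [← Fc.map_comp, c.w f]
  arity := c.arity ≫ eqToHom (Functor.congr_obj hsur c.pt).symm
  fac j := by
    have h1 := Functor.congr_hom hsur (c.leg j)
    dsimp only [Functor.comp_map] at h1
    rw [h1, eqToHom_trans_assoc, ← Category.assoc, c.fac j]

/-- A surfunctor preserves `J`-surlimits. -/
def PreservesSurlimitsOfShape {A : E ⥤ G} {A' : E' ⥤ G} (Fc : E ⥤ E') (hsur : Fc ⋙ A' = A)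
    (J : Type w) [Category.{w'} J] : Prop :=
  ∀ (D : J ⥤ E) (B : G) (hc : ArityConst A D B) (c : Surcone A D B hc.obj_eq),
    IsSurlimit A c → IsSurlimit A' (c.map Fc hsur)

/-- A surfunctor preserves `J`-surcolimits. -/
def PreservesSurcolimitsOfShape {A : E ⥤ G} {A' : E' ⥤ G} (Fc : E ⥤ E') (hsur : Fc ⋙ A' = A)
    (J : Type w) [Category.{w'} J] : Prop :=
  ∀ (D : J ⥤ E) (B : G) (hc : ArityConst A D B) (c : Surcocone A D B hc.obj_eq),
    IsSurcolimit A c → IsSurcolimit A' (c.map Fc hsur)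

/-- A surfunctor preserves K-equalizers. -/
def PreservesKEqualizers {A : E ⥤ G} {A' : E' ⥤ G} (Fc : E ⥤ E')
    (_hsur : Fc ⋙ A' = A) : Prop :=
  ∀ ⦃a b c : E⦄ (f g : a ⟶ b) (e : c ⟶ a) (hc : A.obj c = A.obj a),
    A.map f = A.map g → A.map e = eqToHom hc → e ≫ f = e ≫ g →
    (∀ ⦃d : E⦄ (k : d ⟶ a), k ≫ f = k ≫ g → ∃! l : d ⟶ c, l ≫ e = k) →
    (Fc.map e ≫ Fc.map f = Fc.map e ≫ Fc.map g ∧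
     ∀ ⦃d : E'⦄ (k : d ⟶ Fc.obj a), k ≫ Fc.map f = k ≫ Fc.map g →
       ∃! l : d ⟶ Fc.obj c, l ≫ Fc.map e = k)

/-- A suradjunction : an adjunction between surfunctors whose unit and counit lie over
identities of the base. -/
structure IsSuradjunction (A' : E' ⥤ G) (A : E ⥤ G) (Fl : E' ⥤ E) (Fr : E ⥤ E')
    (adj : Fl ⊣ Fr) : Prop where
  left_sur : Fl ⋙ A = A'
  right_sur : Fr ⋙ A' = A
  unit_arity : ∀ X : E', A'.map (adj.unit.app X) =
    eqToHom (((Functor.congr_obj right_sur (Fl.obj X)).trans (Functor.congr_obj left_sur X)).symm)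
  counit_arity : ∀ Y : E, A.map (adj.counit.app Y) =
    eqToHom ((Functor.congr_obj left_sur (Fr.obj Y)).trans (Functor.congr_obj right_sur Y))

/-- `U` creates surcoequalizers of the parallel pair `(f, g)`. -/
def CreatesSurcoequalizersOf (A : E ⥤ G) (A' : E' ⥤ G) (U : E ⥤ E')
    {a b : E} (f g : a ⟶ b) : Prop :=
  ∀ (c : E') (e : U.obj b ⟶ c), IsSurcoequalizer A' (U.map f) (U.map g) e →
    ∃ (z : E) (q : b ⟶ z) (hz : U.obj z = c),
      U.map q = e ≫ eqToHom hz.symm ∧ IsSurcoequalizer A f g q ∧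
      ∀ (z' : E) (q' : b ⟶ z') (hz' : U.obj z' = c),
        U.map q' = e ≫ eqToHom hz'.symm →
        ∃ hzz : z = z', q' = q ≫ eqToHom hzz

/-- The solution set condition for an object `B` relative to a surfunctor `Fc`. -/
def SolutionSet (A' : E' ⥤ G) (Fc : E ⥤ E') (B : E') : Prop :=
  ∃ (I : Type w) (obj : I → E) (bi : ∀ i, B ⟶ Fc.obj (obj i))
    (hι : ∀ i, A'.obj B = A'.obj (Fc.obj (obj i))),
    (∀ i, A'.map (bi i) = eqToHom (hι i)) ∧
    ∀ (a : E) (b : B ⟶ Fc.obj a), ∃ (i : I) (x : obj i ⟶ a), bi i ≫ Fc.map x = b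

/-- A fusionnable suradjunction (condition on the right adjoint surfunctor `U`). -/
def Fusionnable {Ac : E ⥤ G} {Ab : E' ⥤ G} (U : E ⥤ E') (hU : U ⋙ Ab = Ac) : Prop :=
  HasSurcoequalizers Ac ∧ HasSurcolimitsOfShape Ac ℕ ∧ HasSurcolimitsOfShape Ab ℕ ∧
  U.Faithful ∧ PreservesSurcolimitsOfShape U hU ℕ

/-- A `κ`-filtered category : every diagram of size `< κ` admits a cocone. -/
def IsCardinalFilteredCat (J : Type w) [Category.{w} J] (κ : Cardinal.{w}) : Prop :=
  ∀ (K : Type w) [SmallCategory K], Cardinal.mk K < κ →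
    Cardinal.mk ((k : K) × (k' : K) × (k ⟶ k')) < κ →
    ∀ D : K ⥤ J, ∃ (j : J) (cc : ∀ k, D.obj k ⟶ j),
      ∀ {k k'} (f : k ⟶ k'), D.map f ≫ cc k' = cc k

end Two

section Pullback

variable {E : Type u₁} [Category.{v₁} E] {E' : Type u₂} [Category.{v₂} E']
  {Bc : Type u₃} [Category.{v₃} Bc]

/-- The strict pullback of two functors `U : E ⥤ Bc` and `V : E' ⥤ Bc`. -/
structure CatPullback (U : E ⥤ Bc) (V : E' ⥤ Bc) where
  left : E
  right : E'
  eq : U.obj left = V.obj right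

@[ext]
structure CatPullbackHom (U : E ⥤ Bc) (V : E' ⥤ Bc) (X Y : CatPullback U V) where
  left : X.left ⟶ Y.left
  right : X.right ⟶ Y.right
  w : U.map left = eqToHom X.eq ≫ V.map right ≫ eqToHom Y.eq.symm

instance (U : E ⥤ Bc) (V : E' ⥤ Bc) : Category (CatPullback U V) where
  Hom X Y := CatPullbackHom U V X Y
  id X := ⟨𝟙 _, 𝟙 _, by simp⟩
  comp f g := ⟨f.left ≫ g.left, f.right ≫ g.right, by simp [f.w, g.w]⟩
  id_comp f := by apply CatPullbackHom.ext <;> simp [CategoryStruct.comp, CategoryStruct.id]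
  comp_id f := by apply CatPullbackHom.ext <;> simp [CategoryStruct.comp, CategoryStruct.id]
  assoc f g h := by apply CatPullbackHom.ext <;> simp [CategoryStruct.comp]

/-- The canonical functor from the strict pullback of `U` and `V` to their common codomain. -/
def Ofun (U : E ⥤ Bc) (V : E' ⥤ Bc) : CatPullback U V ⥤ Bc where
  obj X := U.obj X.left
  map f := U.map f.left
  map_id X := by
    show U.map (𝟙 X.left) = _
    simp
  map_comp f g := by
    show U.map (_ ≫ _) = _
    simp

/-- The arity functor on the comma category `B ↓ Fc` of a surfunctor `Fc`. -/
def commaArity {A : E ⥤ G} {A' : E' ⥤ G} (Fc : E ⥤ E') (hsur : Fc ⋙ A' = A) (B : E') :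
    StructuredArrow B Fc ⥤ Under (A'.obj B) where
  obj p := Under.mk (A'.map p.hom ≫ eqToHom (Functor.congr_obj hsur p.right))
  map {p q} f := Under.homMk (A.map f.right) (by
    have hw : p.hom ≫ Fc.map f.right = q.hom := StructuredArrow.w f
    have h1 := Functor.congr_hom hsur f.right
    dsimp only [Functor.comp_map] at h1
    dsimp [Under.mk]
    have h2 : eqToHom (Functor.congr_obj hsur p.right) ≫ A.map f.right
        = A'.map (Fc.map f.right) ≫ eqToHom (Functor.congr_obj hsur q.right) := by
      rw [h1]; simp
    rw [Category.assoc, h2, ← Category.assoc, ← A'.map_comp, hw])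

end Pullback

universe s

/-!
Let `D` be a diagram of suralgebras lying over `B`. Take surcolimits `X` of the underlying
diagram `U D` and `Z` of `T (U D)` in `E`. The structure maps `T (D j) ⟶ D j` induce
`θ : Z ⟶ X`, and `T` applied to the legs of `X` induces `τ : Z ⟶ T X`. The surcolimit of `D`
is the surcoequalizer of the two maps of free algebras `F Z ⇉ F X` transposing `θ ≫ η` and `τ`:
a map `g : F X ⟶ P` equalizes them exactly when every composite `D j ⟶ X ⟶ T X ⟶ P` is a map of
algebras. Conversely, surcoequalizers are surcolimits over a parallel pair, which lives in
universe `s` as `WalkingParallelFamily (ULift Bool)`.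
-/

section General

variable {E : Type u₁} [Category.{v₁} E] {A : E ⥤ G}

theorem ArityConst.map {E' : Type u₂} [Category.{v₂} E'] {A' : E' ⥤ G} {Fc : E ⥤ E'}
    (hsur : Fc ⋙ A' = A) {J : Type w} [Category.{w'} J] {F : J ⥤ E} {B : G}
    (hF : ArityConst A F B) : ArityConst A' (F ⋙ Fc) B where
  obj_eq j := (Functor.congr_obj hsur (F.obj j)).trans (hF.obj_eq j)
  map_eq f := by
    have h := Functor.congr_hom hsur (F.map f)
    rw [hF.map_eq f, Functor.comp_map] at h
    simp [h]

variable {J : Type w} [Category.{w'} J] {F : J ⥤ E} {B : G} {h : ∀ j, A.obj (F.obj j) = B}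

def Surcocone.precompose {F' : J ⥤ E} {h' : ∀ j, A.obj (F'.obj j) = B} (α : F' ⟶ F)
    (hα : ∀ j, A.map (α.app j) = eqToHom ((h' j).trans (h j).symm))
    (c : Surcocone A F B h) : Surcocone A F' B h' where
  pt := c.pt
  leg j := α.app j ≫ c.leg j
  w f := by rw [α.naturality_assoc, c.w]
  arity := c.arity
  fac j := by simp [hα, ← c.fac j]

namespace IsSurcolimit

variable {c : Surcocone A F B h} (hc : IsSurcolimit A c)
include hc

theorem map_leg (j : J) : A.map (c.leg j) = eqToHom ((h j).trans hc.pt_eq.symm) := by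
  have hfac := c.fac j
  rw [hc.arity_eq, eqToHom_comp_iff] at hfac
  simp [hfac]

theorem hom_ext {Y : E} {f f' : c.pt ⟶ Y} (hleg : ∀ j, c.leg j ≫ f = c.leg j ≫ f')
    (hA : A.map f = A.map f') : f = f' := by
  let c' : Surcocone A F B h :=
    { pt := Y
      leg j := c.leg j ≫ f
      w g := by rw [← Category.assoc, c.w]
      arity := eqToHom hc.pt_eq.symm ≫ A.map f
      fac j := by simp [hc.map_leg] }
  exact (hc.desc c').unique ⟨fun _ => rfl, rfl⟩
    ⟨fun j => (hleg j).symm, congrArg (eqToHom _ ≫ ·) hA.symm⟩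

omit hc in
theorem of_exists_desc (pt_eq : A.obj c.pt = B) (arity_eq : c.arity = eqToHom pt_eq.symm)
    (exists_desc : ∀ c' : Surcocone A F B h, ∃ f : c.pt ⟶ c'.pt,
      (∀ j, c.leg j ≫ f = c'.leg j) ∧ eqToHom pt_eq.symm ≫ A.map f = c'.arity)
    (hom_ext : ∀ {Y : E} {f f' : c.pt ⟶ Y}, (∀ j, c.leg j ≫ f = c.leg j ≫ f') →
      A.map f = A.map f' → f = f') :
    IsSurcolimit A c where
  pt_eq := pt_eq
  arity_eq := arity_eq
  desc c' := by
    obtain ⟨f, hf⟩ := exists_desc c'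
    refine ⟨f, hf, fun f' hf' => hom_ext (fun j => (hf'.1 j).trans (hf.1 j).symm) ?_⟩
    rw [← cancel_epi (eqToHom pt_eq.symm), hf'.2, hf.2]

noncomputable def descHom (c' : Surcocone A F B h) : c.pt ⟶ c'.pt :=
  (hc.desc c').exists.choose

theorem leg_descHom (c' : Surcocone A F B h) (j : J) : c.leg j ≫ hc.descHom c' = c'.leg j :=
  (hc.desc c').exists.choose_spec.1 j

theorem map_descHom (c' : Surcocone A F B h) :
    A.map (hc.descHom c') = eqToHom hc.pt_eq ≫ c'.arity := by
  rw [← eqToHom_comp_iff]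
  exact (hc.desc c').exists.choose_spec.2

end IsSurcolimit

theorem IsSurcoequalizer.hom_ext {a b c : E} {f g : a ⟶ b} {e : b ⟶ c}
    (he : IsSurcoequalizer A f g e) {d : E} {l l' : c ⟶ d} (h : e ≫ l = e ≫ l') : l = l' := by
  obtain ⟨-, -, hfg, hdesc⟩ := he
  exact (hdesc (e ≫ l) (by rw [← Category.assoc, hfg, Category.assoc])).unique rfl h.symm

end General

section Coequalizers

variable {E : Type u₁} [Category.{v₁} E] {A : E ⥤ G}

theorem hasSurcoequalizers_of_hasSurcolimitsOfShape
    (hA : HasSurcolimitsOfShape A (WalkingParallelFamily (ULift.{s} Bool))) :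
    HasSurcoequalizers A := by
  intro a b f g hab hf hg
  let F := parallelFamily fun j : ULift.{s} Bool => bif j.down then f else g
  have hF : ArityConst A F (A.obj b) :=
    { obj_eq := by rintro (_ | _); exacts [hab, rfl]
      map_eq := by rintro _ _ (_ | ⟨⟨_ | _⟩⟩) <;> simp [F, hf, hg] }
  obtain ⟨c, hc⟩ := hA F (A.obj b) hF
  have hw (j : ULift.{s} Bool) : F.map (.line j) ≫ c.leg .one = c.leg .zero := c.w _
  refine ⟨c.pt, c.leg .one, hc.pt_eq.symm, hc.map_leg _,
    (hw ⟨true⟩).trans (hw ⟨false⟩).symm, fun d k hk => ?_⟩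
  let ck : Surcocone A F (A.obj b) hF.obj_eq :=
    { pt := d
      leg
        | .zero => f ≫ k
        | .one => k
      w := by rintro _ _ (_ | ⟨⟨_ | _⟩⟩) <;> simp [F, hk]
      arity := A.map k
      fac := by
        rintro (_ | _)
        · show eqToHom _ ≫ A.map (f ≫ k) = A.map k
          rw [A.map_comp, hf]
          exact (eqToHom_trans_assoc _ _ _).trans (by simp)
        · exact Category.id_comp _ }
  have hmap (l : c.pt ⟶ d) (hl : c.leg .one ≫ l = k) :
      A.map l = eqToHom hc.pt_eq ≫ A.map k := by
    have hAl := congrArg A.map hl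
    rwa [A.map_comp, hc.map_leg, eqToHom_comp_iff] at hAl
  have hdesc : c.leg .one ≫ hc.descHom ck = k := hc.leg_descHom ck .one
  refine ⟨hc.descHom ck, hdesc, fun l hl => hc.hom_ext ?_ ?_⟩
  · rintro (_ | _)
    · rw [← hw ⟨true⟩, Category.assoc, Category.assoc]
      exact congrArg _ (hl.trans hdesc.symm)
    · exact hl.trans hdesc.symm
  · rw [hmap l hl, hmap _ hdesc]

end Coequalizers

section FreeAlgebra

variable {E : Type u₁} [Category.{v₁} E] (T : Monad E)

-- `T.free.obj X` restated so that its carrier is reducibly `T.obj X`: composites of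
-- `T.obj X`-valued maps with `g.f` for `g : freeAlgebra T X ⟶ P` can then be rewritten.
abbrev freeAlgebra (X : E) : T.Algebra where
  A := T.obj X
  a := T.μ.app X
  assoc := (T.assoc X).symm

variable {T} {X : E} {P : T.Algebra}

def freeDesc (w : X ⟶ P.A) : freeAlgebra T X ⟶ P where
  f := T.map w ≫ P.a
  h := by
    rw [T.map_comp, Category.assoc, ← P.assoc, ← T.μ.naturality_assoc]
    rfl

theorem freeDesc_f (w : X ⟶ P.A) : (freeDesc w).f = T.map w ≫ P.a :=
  rfl

theorem unit_freeDesc_f (w : X ⟶ P.A) : T.η.app X ≫ (freeDesc w).f = w := by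
  rw [freeDesc_f, ← T.η.naturality_assoc, P.unit]
  exact Category.comp_id w

theorem freeDesc_unit_comp_f (g : freeAlgebra T X ⟶ P) : freeDesc (T.η.app X ≫ g.f) = g := by
  ext
  rw [freeDesc_f, T.map_comp, Category.assoc, g.h, ← Category.assoc, T.right_unit]
  exact Category.id_comp g.f

theorem freeAlgebra_hom_ext {g g' : freeAlgebra T X ⟶ P}
    (h : T.η.app X ≫ g.f = T.η.app X ≫ g'.f) : g = g' := by
  rw [← freeDesc_unit_comp_f g, h, freeDesc_unit_comp_f]

theorem freeAlgebra_hom_ext_iff {g g' : freeAlgebra T X ⟶ P} :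
    g = g' ↔ T.η.app X ≫ g.f = T.η.app X ≫ g'.f :=
  ⟨fun h => h ▸ rfl, freeAlgebra_hom_ext⟩

theorem unit_comp_freeDesc_comp_f {Y : E} (k : Y ⟶ T.obj X) (g : freeAlgebra T X ⟶ P) :
    T.η.app Y ≫ (freeDesc k ≫ g).f = k ≫ g.f := by
  rw [Monad.Algebra.comp_f, ← Category.assoc, unit_freeDesc_f]

end FreeAlgebra

namespace IsSurmonad

variable {E : Type u₁} [Category.{v₁} E] {A : E ⥤ G} {T : Monad E} (hT : IsSurmonad A T)
include hT

theorem obj_eq (X : E) : A.obj (T.obj X) = A.obj X :=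
  Functor.congr_obj hT.sur X

theorem map_map {X Y : E} (f : X ⟶ Y) :
    A.map (T.map f) = eqToHom (hT.obj_eq X) ≫ A.map f ≫ eqToHom (hT.obj_eq Y).symm :=
  Functor.congr_hom hT.sur f

theorem map_a (P : T.Algebra) : A.map P.a = eqToHom (hT.obj_eq P.A) := by
  have h := congrArg A.map P.unit
  rw [A.map_comp, hT.unit_arity, eqToHom_comp_iff] at h
  simp [h]

theorem map_freeDesc_f {X : E} {P : T.Algebra} (w : X ⟶ P.A) :
    A.map (freeDesc w).f = eqToHom (hT.obj_eq X) ≫ A.map w := by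
  simp [freeDesc_f, hT.map_map, hT.map_a]

end IsSurmonad

section Construction

variable {E : Type u₁} [Category.{v₁} E] {A : E ⥤ G} {T : Monad E} (hT : IsSurmonad A T)
  {J : Type w} [Category.{w'} J] {D : J ⥤ T.Algebra} {B : G}
  {hB : ∀ j, A.obj ((D ⋙ T.forget).obj j) = B}
  {X : Surcocone A (D ⋙ T.forget) B hB} (hX : IsSurcolimit A X)
  {hTB : ∀ j, A.obj ((D ⋙ T.forget ⋙ T.toFunctor).obj j) = B}
  {Z : Surcocone A (D ⋙ T.forget ⋙ T.toFunctor) B hTB} (hZ : IsSurcolimit A Z)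

variable (X) in
noncomputable def structureDesc : Z.pt ⟶ X.pt :=
  hZ.descHom (X.precompose (Monad.ForgetCreatesLimits.γ D) fun j => hT.map_a (D.obj j))

variable (X) in
noncomputable def comparisonDesc : Z.pt ⟶ T.obj X.pt :=
  hZ.descHom (X.map T.toFunctor hT.sur)

theorem leg_structureDesc (j : J) :
    Z.leg j ≫ structureDesc hT X hZ = (Monad.ForgetCreatesLimits.γ D).app j ≫ X.leg j :=
  hZ.leg_descHom _ j

theorem leg_comparisonDesc (j : J) : Z.leg j ≫ comparisonDesc hT X hZ = T.map (X.leg j) :=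
  hZ.leg_descHom _ j

theorem map_structureDesc :
    A.map (structureDesc hT X hZ) = eqToHom (hZ.pt_eq.trans hX.pt_eq.symm) := by
  simp [structureDesc, hZ.map_descHom, Surcocone.precompose, hX.arity_eq]

theorem map_comparisonDesc :
    A.map (comparisonDesc hT X hZ) =
      eqToHom (hZ.pt_eq.trans ((hT.obj_eq X.pt).trans hX.pt_eq).symm) := by
  simp [comparisonDesc, hZ.map_descHom, Surcocone.map, hX.arity_eq]

include hX in
theorem structureDesc_comp_eq_iff {P : T.Algebra} (w : X.pt ⟶ P.A) :
    structureDesc hT X hZ ≫ w = comparisonDesc hT X hZ ≫ T.map w ≫ P.a ↔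
      ∀ j, T.map (X.leg j ≫ w) ≫ P.a =
        (Monad.ForgetCreatesLimits.γ D).app j ≫ X.leg j ≫ w := by
  have hleg (j : J) :
      Z.leg j ≫ comparisonDesc hT X hZ ≫ T.map w ≫ P.a = T.map (X.leg j ≫ w) ≫ P.a := by
    rw [← Category.assoc, leg_comparisonDesc, T.map_comp, Category.assoc]
  constructor
  · intro h j
    rw [← hleg, ← h, ← Category.assoc, leg_structureDesc, Category.assoc]
  · intro h
    refine hZ.hom_ext (fun j => ?_) ?_
    · rw [hleg, h, ← Category.assoc, leg_structureDesc, Category.assoc]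
    · simp [map_structureDesc hT hX hZ, map_comparisonDesc hT hX hZ, hT.map_map, hT.map_a]

variable (X) in
noncomputable def freeStructureDesc : freeAlgebra T Z.pt ⟶ freeAlgebra T X.pt :=
  freeDesc (structureDesc hT X hZ ≫ T.η.app X.pt)

variable (X) in
noncomputable def freeComparisonDesc : freeAlgebra T Z.pt ⟶ freeAlgebra T X.pt :=
  freeDesc (comparisonDesc hT X hZ)

theorem map_freeStructureDesc_f :
    A.map (freeStructureDesc hT X hZ).f =
      eqToHom ((hT.obj_eq Z.pt).trans (hZ.pt_eq.trans ((hT.obj_eq X.pt).trans hX.pt_eq).symm)) := by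
  simp [freeStructureDesc, hT.map_freeDesc_f, map_structureDesc hT hX hZ, hT.unit_arity]

theorem map_freeComparisonDesc_f :
    A.map (freeComparisonDesc hT X hZ).f =
      eqToHom ((hT.obj_eq Z.pt).trans (hZ.pt_eq.trans ((hT.obj_eq X.pt).trans hX.pt_eq).symm)) := by
  simp [freeComparisonDesc, hT.map_freeDesc_f, map_comparisonDesc hT hX hZ]

include hX in
theorem freeStructureDesc_comp_eq_iff {P : T.Algebra} (g : freeAlgebra T X.pt ⟶ P) :
    freeStructureDesc hT X hZ ≫ g = freeComparisonDesc hT X hZ ≫ g ↔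
      ∀ j, T.map (X.leg j ≫ T.η.app X.pt ≫ g.f) ≫ P.a =
        (Monad.ForgetCreatesLimits.γ D).app j ≫ X.leg j ≫ T.η.app X.pt ≫ g.f := by
  rw [freeAlgebra_hom_ext_iff, freeStructureDesc, freeComparisonDesc, unit_comp_freeDesc_comp_f,
    unit_comp_freeDesc_comp_f, Category.assoc, ← structureDesc_comp_eq_iff hT hX hZ,
    ← freeDesc_f, freeDesc_unit_comp_f]

variable {Q : T.Algebra} {e : freeAlgebra T X.pt ⟶ Q}
  (he : IsSurcoequalizer (T.forget ⋙ A) (freeStructureDesc hT X hZ)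
    (freeComparisonDesc hT X hZ) e)

include he in
theorem map_coequalizer_f :
    A.map e.f = eqToHom (show A.obj (T.obj X.pt) = A.obj Q.A from he.1) :=
  he.2.1

include hX he in
theorem obj_coequalizer_eq : A.obj Q.A = B :=
  he.1.symm.trans ((hT.obj_eq X.pt).trans hX.pt_eq)

-- An `abbrev`, so that its apex is reducibly `Q`.
noncomputable abbrev coequalizerCocone : Surcocone (T.forget ⋙ A) D B hB where
  pt := Q
  leg j :=
    { f := X.leg j ≫ T.η.app X.pt ≫ e.f
      h := (freeStructureDesc_comp_eq_iff hT hX hZ e).1 he.2.2.1 j }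
  w f := Monad.Algebra.Hom.ext ((Category.assoc _ _ _).symm.trans (X.w f =≫ _))
  arity := eqToHom (obj_coequalizer_eq hT hX hZ he).symm
  fac j := by
    show eqToHom _ ≫ A.map (X.leg j ≫ T.η.app X.pt ≫ e.f) = _
    rw [A.map_comp, A.map_comp, hX.map_leg, hT.unit_arity, map_coequalizer_f hT hZ he]
    simp
    rfl

-- The legs are typed at `(D.obj j).A` but built from `X.leg j`, typed at `(D ⋙ T.forget).obj j`;
-- reassociating them is done once here, by unification rather than `rw`.
theorem coequalizerCocone_leg_comp_f (j : J) {P : T.Algebra} (φ : Q ⟶ P) :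
    ((coequalizerCocone hT hX hZ he).leg j ≫ φ).f = X.leg j ≫ T.η.app X.pt ≫ (e ≫ φ).f :=
  (Category.assoc _ _ _).trans (congrArg (X.leg j ≫ ·) (Category.assoc _ _ _))

theorem isSurcolimit_coequalizerCocone :
    IsSurcolimit (T.forget ⋙ A) (coequalizerCocone hT hX hZ he) := by
  refine .of_exists_desc (obj_coequalizer_eq hT hX hZ he) rfl (fun c' => ?_)
    (fun {_ φ₁ φ₂} hleg hA => ?_)
  · obtain ⟨p, hp, hp_map⟩ : ∃ p : X.pt ⟶ c'.pt.A,
        (∀ j, X.leg j ≫ p = (c'.leg j).f) ∧ A.map p = eqToHom hX.pt_eq ≫ c'.arity :=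
      ⟨_, hX.leg_descHom (c'.map T.forget rfl),
        (hX.map_descHom _).trans (by simp [Surcocone.map])⟩
    have hfork :
        freeStructureDesc hT X hZ ≫ freeDesc p = freeComparisonDesc hT X hZ ≫ freeDesc p := by
      rw [freeStructureDesc_comp_eq_iff hT hX hZ, unit_freeDesc_f]
      intro j
      rw [hp]
      exact (c'.leg j).h
    obtain ⟨φ, hφ, -⟩ := he.2.2.2 _ hfork
    refine ⟨φ, fun j => ?_, ?_⟩
    · ext
      rw [coequalizerCocone_leg_comp_f, hφ, unit_freeDesc_f, hp]
    · have h := congrArg (fun g => A.map g.f) hφ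
      simp only [Monad.Algebra.comp_f, A.map_comp, map_coequalizer_f hT hZ he, hT.map_freeDesc_f,
        hp_map] at h
      rw [eqToHom_comp_iff] at h
      show eqToHom (obj_coequalizer_eq hT hX hZ he).symm ≫ A.map φ.f = _
      rw [h]
      exact (eqToHom_trans_assoc _ _ _).trans ((eqToHom_trans_assoc _ _ _).trans
        ((eqToHom_trans_assoc _ _ _).trans (Category.id_comp _)))
  · have hA' : A.map φ₁.f = A.map φ₂.f := hA
    refine he.hom_ext (freeAlgebra_hom_ext (hX.hom_ext (fun j => ?_) ?_))
    · have h := congrArg Monad.Algebra.Hom.f (hleg j)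
      rwa [coequalizerCocone_leg_comp_f, coequalizerCocone_leg_comp_f] at h
    · simp [A.map_comp, map_coequalizer_f hT hZ he, hA']

end Construction

theorem hasSurcolimitsOfShape_algebra_of_hasSurcoequalizers {E : Type u₁} [Category.{v₁} E]
    {A : E ⥤ G} {T : Monad E} (hT : IsSurmonad A T) {J : Type w} [Category.{w'} J]
    (hA : HasSurcolimitsOfShape A J) (hcoeq : HasSurcoequalizers (T.forget ⋙ A)) :
    HasSurcolimitsOfShape (T.forget ⋙ A) J := by
  intro D B hD
  obtain ⟨X, hX⟩ := hA (D ⋙ T.forget) B (hD.map rfl)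
  obtain ⟨Z, hZ⟩ := hA (D ⋙ T.forget ⋙ T.toFunctor) B ((hD.map rfl).map hT.sur)
  obtain ⟨Q, e, he⟩ := hcoeq (freeStructureDesc hT X hZ) (freeComparisonDesc hT X hZ) _
    (map_freeStructureDesc_f hT hX hZ) (map_freeComparisonDesc_f hT hX hZ)
  exact ⟨_, isSurcolimit_coequalizerCocone hT hX hZ he⟩

/-- Over a surcocomplete base, the surcategory of suralgebras has surcoequalizers iff it is
surcocomplete. -/
theorem suralgebras_surcocomplete_iff_surcoequalizers
    {G : Type u} [Category.{v} G] {E : Type u₁} [Category.{v₁} E]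
    (A : E ⥤ G) (T : Monad E) (hT : IsSurmonad A T)
    (hc : ∀ (J : Type s) [SmallCategory J], HasSurcolimitsOfShape A J) :
    HasSurcoequalizers (T.forget ⋙ A) ↔
      ∀ (J : Type s) [SmallCategory J], HasSurcolimitsOfShape (T.forget ⋙ A) J :=
  ⟨fun hcoeq J _ => hasSurcolimitsOfShape_algebra_of_hasSurcoequalizers hT (hc J) hcoeq,
    fun h => hasSurcoequalizers_of_hasSurcolimitsOfShape (h _)⟩

end Sur
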